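/- Let m ≥ 1 be an integer and set g_m := 1/(4·cos²(π/(m+2))). Then for every real g ∈ (0, g_m), the recursion defining X is well defined up to index m, i.e. X_k(g) > 0 and 1 − g·X_k(g) > 0 for all k < m; moreover X_m(g) tends to +∞ as g tends to g_m from the left. -/

import Mathlib

/-!
Writing `X_k = b_k / b_{k+1}` linearises the recursion to `b_{k+2} = b_{k+1} - g b_k` with
`b_0 = b_1 = 1`. For `g = 1/(4 cos² θ)` this is the Chebyshev recursion, solved by
`(2 cos θ)^k sin θ · b_k = sin ((k+1) θ)`. Hence for `1/4 < g < g_m`, i.e. `0 < θ < π/(m+2)`, the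
numbers `b_0, …, b_{m+1}` are positive (for `g ≤ 1/4` this follows from `b_k ≤ 2 b_{k+1}`), while
at `g = g_m` the denominator `b_{m+1}` vanishes and `b_m` does not, so `X_m = b_m / b_{m+1} → +∞`
as `g ↑ g_m`.
-/

noncomputable def Xseq (g : ℝ) : ℕ → ℝ
  | 0 => 1
  | m + 1 => 1 / (1 - g * Xseq g m)

open Real Filter Set Topology

noncomputable def critCoupling (m : ℕ) : ℝ := 1 / (4 * cos (π / (m + 2)) ^ 2)

noncomputable def bseq (g : ℝ) : ℕ → ℝ
  | 0 => 1
  | 1 => 1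
  | k + 2 => bseq g (k + 1) - g * bseq g k

theorem bseq_add_two (g : ℝ) (k : ℕ) : bseq g (k + 2) = bseq g (k + 1) - g * bseq g k := rfl

theorem continuous_bseq : ∀ n, Continuous fun g => bseq g n
  | 0 => continuous_const
  | 1 => continuous_const
  | k + 2 => (continuous_bseq (k + 1)).sub (continuous_id.mul (continuous_bseq k))

theorem one_sub_mul_bseq_div {g : ℝ} {k : ℕ} (h : bseq g (k + 1) ≠ 0) :
    1 - g * (bseq g k / bseq g (k + 1)) = bseq g (k + 2) / bseq g (k + 1) := by
  rw [bseq_add_two]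
  field_simp

theorem Xseq_eq_bseq_div {g : ℝ} {k : ℕ} (h : ∀ j ≤ k + 1, bseq g j ≠ 0) :
    Xseq g k = bseq g k / bseq g (k + 1) := by
  induction k with
  | zero => simp [Xseq, bseq]
  | succ k ih =>
    rw [Xseq, ih fun j hj => h j (by omega), one_sub_mul_bseq_div (h (k + 1) (by omega)),
      one_div_div]

theorem bseq_pos_of_le_quarter {g : ℝ} (hg : g ≤ 1 / 4) (n : ℕ) :
    0 < bseq g n := by
  have key : ∀ n, 0 < bseq g n ∧ bseq g n ≤ 2 * bseq g (n + 1) := by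
    intro n
    induction n with
    | zero => norm_num [bseq]
    | succ n ih =>
      obtain ⟨hpos, hle⟩ := ih
      rw [bseq_add_two]
      constructor <;> nlinarith
  exact (key n).1

theorem bseq_mul_sin {θ : ℝ} (hc : cos θ ≠ 0) : ∀ n : ℕ,
    (2 * cos θ) ^ n * sin θ * bseq (1 / (4 * cos θ ^ 2)) n = sin ((n + 1) * θ)
  | 0 => by simp [bseq]
  | 1 => by
    rw [show ((1 : ℕ) + 1 : ℝ) * θ = 2 * θ by norm_num, sin_two_mul]
    simp only [bseq]
    ring
  | k + 2 => by
    have h1 := bseq_mul_sin hc (k + 1)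
    have h0 := bseq_mul_sin hc k
    have sin_rec :
        sin ((k + 2 + 1) * θ) = 2 * cos θ * sin ((k + 1 + 1) * θ) - sin ((k + 1) * θ) := by
      rw [show (k + 2 + 1) * θ = (k + 1 + 1) * θ + θ by ring,
        show (k + 1) * θ = (k + 1 + 1) * θ - θ by ring, sin_add, sin_sub]
      ring
    push_cast at h1 h0 ⊢
    rw [bseq_add_two, sin_rec, ← h1, ← h0]
    field_simp
    ring

theorem bseq_pos_of_mul_lt_pi {θ : ℝ} (h0 : 0 < θ) (hθ : θ < π / 2) {n : ℕ}
    (hn : (n + 1) * θ < π) : 0 < bseq (1 / (4 * cos θ ^ 2)) n := by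
  have hc : 0 < cos θ := cos_pos_of_mem_Ioo ⟨by linarith, hθ⟩
  have hs : 0 < sin θ := sin_pos_of_pos_of_lt_pi h0 (by linarith)
  have hsin : 0 < sin ((n + 1) * θ) := sin_pos_of_pos_of_lt_pi (by positivity) hn
  rw [← bseq_mul_sin hc.ne'] at hsin
  exact pos_of_mul_pos_right hsin (by positivity)

theorem exists_eq_one_div_four_mul_cos_sq {t g : ℝ} (ht0 : 0 ≤ t) (ht : t < π / 2)
    (hg : g ∈ Ioo (1 / 4) (1 / (4 * cos t ^ 2))) :
    ∃ θ ∈ Ioo 0 t, 1 / (4 * cos θ ^ 2) = g := by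
  have hcont : ContinuousOn (fun θ => 1 / (4 * cos θ ^ 2)) (Icc 0 t) :=
    continuousOn_const.div (by fun_prop) fun θ hθ => by
      have := cos_pos_of_mem_Ioo ⟨by linarith [hθ.1], hθ.2.trans_lt ht⟩
      positivity
  simpa using intermediate_value_Ioo ht0 hcont (by simpa using hg)

section critCoupling

variable {m : ℕ}

theorem pi_div_nat_add_two_lt_pi_div_two (hm : 1 ≤ m) : π / (m + 2) < π / 2 := by
  have : (1 : ℝ) ≤ m := by exact_mod_cast hm
  gcongr
  linarith

theorem bseq_pos_of_lt_critCoupling (hm : 1 ≤ m) {g : ℝ} (hg : g < critCoupling m) {j : ℕ}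
    (hj : j ≤ m + 1) : 0 < bseq g j := by
  rcases le_or_gt g (1 / 4) with hg4 | hg4
  · exact bseq_pos_of_le_quarter hg4 j
  have ht0 : 0 < π / (m + 2) := by positivity
  have ht := pi_div_nat_add_two_lt_pi_div_two hm
  obtain ⟨θ, ⟨hθ0, hθt⟩, rfl⟩ := exists_eq_one_div_four_mul_cos_sq ht0.le ht ⟨hg4, hg⟩
  refine bseq_pos_of_mul_lt_pi hθ0 (hθt.trans ht) ?_
  have hj' : (j : ℝ) + 1 ≤ m + 2 := by exact_mod_cast (by omega : j + 1 ≤ m + 2)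
  calc (j + 1) * θ ≤ (m + 2) * θ := by gcongr
    _ < (m + 2) * (π / (m + 2)) := by gcongr
    _ = π := mul_div_cancel₀ _ (by positivity)

theorem bseq_critCoupling_pos (hm : 1 ≤ m) : 0 < bseq (critCoupling m) m := by
  refine bseq_pos_of_mul_lt_pi (by positivity) (pi_div_nat_add_two_lt_pi_div_two hm) ?_
  calc (m + 1) * (π / (m + 2)) < (m + 2) * (π / (m + 2)) := by gcongr; linarith
    _ = π := mul_div_cancel₀ _ (by positivity)

theorem bseq_critCoupling_succ_eq_zero (hm : 1 ≤ m) : bseq (critCoupling m) (m + 1) = 0 := by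
  have ht0 : 0 < π / (m + 2) := by positivity
  have ht := pi_div_nat_add_two_lt_pi_div_two hm
  have hc : 0 < cos (π / (m + 2)) := cos_pos_of_mem_Ioo ⟨by linarith, ht⟩
  have hs : 0 < sin (π / (m + 2)) := sin_pos_of_pos_of_lt_pi ht0 (by linarith)
  have h := bseq_mul_sin hc.ne' (m + 1)
  rw [show ((m + 1 : ℕ) + 1 : ℝ) * (π / (m + 2)) = π by push_cast; field_simp; ring, sin_pi] at h
  exact (mul_eq_zero.mp h).resolve_left (by positivity)

theorem Xseq_pos_of_lt_critCoupling (hm : 1 ≤ m) {g : ℝ} (hg : g < critCoupling m) {k : ℕ}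
    (hk : k < m) : 0 < Xseq g k ∧ 0 < 1 - g * Xseq g k := by
  have hb := fun j (hj : j ≤ m + 1) => bseq_pos_of_lt_critCoupling hm hg hj
  rw [Xseq_eq_bseq_div fun j hj => (hb j (by omega)).ne',
    one_sub_mul_bseq_div (hb (k + 1) (by omega)).ne']
  exact ⟨div_pos (hb k (by omega)) (hb (k + 1) (by omega)),
    div_pos (hb (k + 2) (by omega)) (hb (k + 1) (by omega))⟩

theorem tendsto_Xseq_critCoupling (hm : 1 ≤ m) :
    Tendsto (fun g => Xseq g m) (𝓝[<] critCoupling m) atTop := by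
  have hleft : ∀ᶠ g in 𝓝[<] critCoupling m, g < critCoupling m := self_mem_nhdsWithin
  have hnum : Tendsto (fun g => bseq g m) (𝓝[<] critCoupling m)
      (𝓝 (bseq (critCoupling m) m)) :=
    (continuous_bseq m).continuousAt.mono_left nhdsWithin_le_nhds
  have hden : Tendsto (fun g => bseq g (m + 1)) (𝓝[<] critCoupling m) (𝓝[>] 0) := by
    refine tendsto_nhdsWithin_iff.mpr
      ⟨?_, hleft.mono fun g hg => bseq_pos_of_lt_critCoupling hm hg le_rfl⟩
    rw [← bseq_critCoupling_succ_eq_zero hm]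
    exact (continuous_bseq (m + 1)).continuousAt.mono_left nhdsWithin_le_nhds
  refine (hnum.pos_mul_atTop (bseq_critCoupling_pos hm)
    (tendsto_inv_nhdsGT_zero.comp hden)).congr' ?_
  filter_upwards [hleft] with g hg
  rw [Xseq_eq_bseq_div fun j hj => (bseq_pos_of_lt_critCoupling hm hg hj).ne']
  exact (div_eq_mul_inv _ _).symm

end critCoupling

theorem stmt_4 (m : ℕ) (hm : 1 ≤ m) (gm : ℝ)
    (hgm : gm = 1 / (4 * Real.cos (Real.pi / (m + 2)) ^ 2)) :
    (∀ g : ℝ, 0 < g → g < gm → ∀ k : ℕ, k < m → 0 < Xseq g k ∧ 0 < 1 - g * Xseq g k) ∧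
    Filter.Tendsto (fun g : ℝ => Xseq g m) (nhdsWithin gm (Set.Iio gm)) Filter.atTop := by
  change gm = critCoupling m at hgm
  subst hgm
  exact ⟨fun _ _ hg _ hk => Xseq_pos_of_lt_critCoupling hm hg hk, tendsto_Xseq_critCoupling hm⟩
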